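/- With the notation of the previous setting (n ≥ 3, M positive integers, A = 6M - n(n+1)(n+5), R(n,M) the explicit degree-6 polynomial in M), if gcd(n,6) = 1 and M³(n-1)²(n+4)⁴A⁷/(54·n⁴(n+1)²·R(n,M)) is a nonzero integer, then n divides M. -/
import Mathlib

theorem stmt (n M : ℤ) (hn : 3 ≤ n) (hM : 0 < M)
    (A : ℤ) (hA : A = 6*M - n*(n+1)*(n+5))
    (R : ℤ) (hR : R = 2^14*3^6*M^6 - 2^13*3^7*n*(n+1)*(n+3)*M^5 + 2^9*3^5*n^2*(n+1)*(n^4+93*n^3+629*n^2+1339*n+818)*M^4 - 2^7*3^4*n^3*(n+1)^2*(13*n^5+436*n^4+3688*n^3+12782*n^2+19163*n+9998)*M^3 + 2^2*3^3*n^4*(n+1)^3*(n+2)*(n+7)^2*(5*n^4+447*n^3+3303*n^2+7873*n+5652)*M^2 - 2^2*3^3*n^5*(n+1)^4*(n+2)^2*(n+5)^2*(n+7)^3*(3*n+5)*M + n^6*(n+1)^5*(n+2)^3*(n+5)^3*(n+7)^4)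
    (hint : ∃ k : ℤ, k ≠ 0 ∧
      ((M^3*(n-1)^2*(n+4)^4*A^7 : ℚ) / (54*n^4*(n+1)^2*R) = (k : ℚ))) (hgcd : Int.gcd n 6 = 1) :
    n ∣ M := by
  obtain ⟨k, hk0, hk⟩ := hint
  set N : ℤ := M^3*(n-1)^2*(n+4)^4*A^7 with hN
  set D : ℤ := 54*n^4*(n+1)^2*R with hD
  have hkD : ((N:ℤ):ℚ)/((D:ℤ):ℚ) = (k:ℚ) := by
    rw [← hk]; push_cast [hN, hD]; ring
  have hDQ : ((D : ℤ) : ℚ) ≠ 0 := by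
    intro h
    rw [h, div_zero] at hkD
    exact hk0 (by exact_mod_cast hkD.symm)
  have hD0 : D ≠ 0 := fun h => hDQ (by exact_mod_cast h)
  have hND : N = k * D := by
    have := (div_eq_iff hDQ).mp hkD
    exact_mod_cast this
  have hN0 : N ≠ 0 := by
    rw [hND]; exact mul_ne_zero hk0 hD0
  have hA0 : A ≠ 0 := by
    intro h; apply hN0; rw [hN, h]; ring
  have hM0 : M ≠ 0 := hM.ne'
  have hn0 : n ≠ 0 := by omega
  have hMa : M.natAbs ≠ 0 := Int.natAbs_ne_zero.mpr hM0
  have hna : n.natAbs ≠ 0 := Int.natAbs_ne_zero.mpr hn0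
  rw [← Int.natAbs_dvd_natAbs]
  rw [← Nat.factorization_le_iff_dvd hna hMa]
  rw [Finsupp.le_def]
  intro p
  by_contra hcon
  push_neg at hcon
  set a := n.natAbs.factorization p with ha
  set b := M.natAbs.factorization p with hb
  have hba : b < a := hcon
  have hp : p.Prime := by
    by_contra hp
    rw [Nat.factorization_eq_zero_of_not_prime _ hp] at ha
    omega
  -- p-power divisibilities
  have hpan : (p:ℤ)^a ∣ n := by
    have : p^a ∣ n.natAbs := ha ▸ Nat.ordProj_dvd _ _
    have h2 := Int.natCast_dvd.mpr this
    push_cast at h2; exact h2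
  have hpbM : (p:ℤ)^b ∣ M := by
    have : p^b ∣ M.natAbs := hb ▸ Nat.ordProj_dvd _ _
    have h2 := Int.natCast_dvd.mpr this
    push_cast at h2; exact h2
  have hpbn : (p:ℤ)^b ∣ n := dvd_trans (pow_dvd_pow _ hba.le) hpan
  have hpb1n : (p:ℤ)^(b+1) ∣ n := dvd_trans (pow_dvd_pow _ hba) hpan
  have hpdvdn : (p:ℤ) ∣ n := dvd_trans (dvd_pow_self _ (by omega : b+1 ≠ 0)) hpb1n
  have hpM1 : ¬ (p:ℤ)^(b+1) ∣ M := by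
    intro h
    have : (p:ℕ)^(b+1) ∣ M.natAbs := by
      rw [← Int.natCast_dvd]; push_cast; exact h
    exact Nat.pow_succ_factorization_not_dvd hMa hp (hb ▸ this)
  -- p is not 2 or 3
  have hpdvd6 : ¬ (p:ℕ) ∣ 6 := by
    intro h6
    have hn' : p ∣ n.natAbs := Int.natCast_dvd.mp hpdvdn
    have h1 : p ∣ Int.gcd n 6 := Nat.dvd_gcd hn' (by simpa using h6)
    rw [hgcd] at h1
    have := Nat.le_of_dvd one_pos h1
    have := hp.two_le
    omega
  have hp2 : p ≠ 2 := fun h => hpdvd6 (h ▸ by norm_num)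
  have hp3 : p ≠ 3 := fun h => hpdvd6 (h ▸ by norm_num)
  -- p does not divide n-1 and n+4
  have hpn1 : ¬ (p:ℤ) ∣ (n - 1) := by
    intro h
    have h1 : (p:ℤ) ∣ 1 := by
      have := dvd_sub hpdvdn h
      rwa [show n - (n-1) = 1 by ring] at this
    have := Int.le_of_dvd one_pos h1
    have := hp.two_le
    omega
  have hpn4 : ¬ (p:ℤ) ∣ (n + 4) := by
    intro h
    have h4 : (p:ℤ) ∣ 4 := by
      have := dvd_sub h hpdvdn; simpa using this
    have h4' : (p:ℕ) ∣ 4 := by simpa using Int.natCast_dvd.mp h4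
    have : p = 2 := (Nat.prime_dvd_prime_iff_eq hp Nat.prime_two).mp
      (hp.dvd_of_dvd_pow (show p ∣ 2^2 by norm_num; exact h4'))
    exact hp2 this
  -- valuation of A is exactly b
  have hcop6 : IsCoprime (p:ℤ) 6 := by
    have c2 : Nat.Coprime p 2 := (Nat.coprime_primes hp Nat.prime_two).mpr hp2
    have c3 : Nat.Coprime p 3 := (Nat.coprime_primes hp Nat.prime_three).mpr hp3
    have : Nat.Coprime p 6 := by simpa using c2.mul_right c3
    have := Nat.isCoprime_iff_coprime.mpr this
    simpa using this
  have hpbA : (p:ℤ)^b ∣ A := by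
    rw [hA]
    have h1 : (p:ℤ)^b ∣ 6*M := Dvd.dvd.mul_left hpbM 6
    have h2 : (p:ℤ)^b ∣ n*(n+1)*(n+5) := (hpbn.mul_right _).mul_right _
    exact dvd_sub h1 h2
  have hpA1 : ¬ (p:ℤ)^(b+1) ∣ A := by
    intro h
    have h2 : (p:ℤ)^(b+1) ∣ n*(n+1)*(n+5) := (hpb1n.mul_right _).mul_right _
    have h6M : (p:ℤ)^(b+1) ∣ 6*M := by
      have : (p:ℤ)^(b+1) ∣ A + n*(n+1)*(n+5) := dvd_add h h2
      rw [hA] at this; simpa using this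
    have : (p:ℤ)^(b+1) ∣ M := (IsCoprime.pow_left hcop6).dvd_of_dvd_mul_left h6M
    exact hpM1 this
  have hAfac : A.natAbs.factorization p = b := by
    have h1 : b ≤ A.natAbs.factorization p := by
      rw [← Nat.Prime.pow_dvd_iff_le_factorization hp (Int.natAbs_ne_zero.mpr hA0)]
      rw [← Int.natCast_dvd]; push_cast; exact hpbA
    have h2 : ¬ (b+1 ≤ A.natAbs.factorization p) := by
      rw [← Nat.Prime.pow_dvd_iff_le_factorization hp (Int.natAbs_ne_zero.mpr hA0)]
      rw [← Int.natCast_dvd]; push_cast; exact hpA1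
    omega
  -- valuation of N is exactly 10*b
  have hn1a : (n-1).natAbs ≠ 0 := Int.natAbs_ne_zero.mpr (by omega)
  have hn4a : (n+4).natAbs ≠ 0 := Int.natAbs_ne_zero.mpr (by omega)
  have hAa : A.natAbs ≠ 0 := Int.natAbs_ne_zero.mpr hA0
  have hNabs : N.natAbs = M.natAbs^3 * (n-1).natAbs^2 * (n+4).natAbs^4 * A.natAbs^7 := by
    rw [hN]; simp [Int.natAbs_mul, Int.natAbs_pow]
  have hNfac : N.natAbs.factorization p = 10*b := by
    rw [hNabs]
    rw [Nat.factorization_mul (by positivity) (by positivity)]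
    rw [Nat.factorization_mul (by positivity) (by positivity)]
    rw [Nat.factorization_mul (by positivity) (by positivity)]
    simp only [Nat.factorization_pow, Finsupp.coe_add, Finsupp.coe_smul, Pi.add_apply,
      Pi.smul_apply, smul_eq_mul]
    rw [← hb, hAfac,
      Nat.factorization_eq_zero_of_not_dvd (fun hd => hpn1 (Int.natCast_dvd.mpr hd)),
      Nat.factorization_eq_zero_of_not_dvd (fun hd => hpn4 (Int.natCast_dvd.mpr hd))]
    ring
  -- but p^(10b+1) divides D hence N : contradiction
  have hkey : ∀ i j : ℕ, 6 ≤ i + j → (p:ℤ)^(6*b) ∣ n^i * M^j := by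
    intro i j hij
    have h1 : (p:ℤ)^(6*b) ∣ (p:ℤ)^((i+j)*b) :=
      pow_dvd_pow _ (Nat.mul_le_mul_right _ hij)
    refine h1.trans ?_
    have : (p:ℤ)^((i+j)*b) = ((p:ℤ)^b)^i * ((p:ℤ)^b)^j := by
      rw [← pow_mul, ← pow_mul, ← pow_add]; ring_nf
    rw [this]
    exact mul_dvd_mul (pow_dvd_pow_of_dvd hpbn i) (pow_dvd_pow_of_dvd hpbM j)
  have hpR : (p:ℤ)^(6*b) ∣ R := by
    rw [hR]
    have t1 : (p:ℤ)^(6*b) ∣ 2^14*3^6*M^6 := by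
      have := (hkey 0 6 (by norm_num)).mul_right (2^14*3^6)
      rw [show (2:ℤ)^14*3^6*M^6 = n^0*M^6*(2^14*3^6) by ring]; exact this
    have t2 : (p:ℤ)^(6*b) ∣ 2^13*3^7*n*(n+1)*(n+3)*M^5 := by
      have := (hkey 1 5 (by norm_num)).mul_right (2^13*3^7*(n+1)*(n+3))
      rw [show (2:ℤ)^13*3^7*n*(n+1)*(n+3)*M^5 = n^1*M^5*(2^13*3^7*(n+1)*(n+3)) by ring]
      exact this
    have t3 : (p:ℤ)^(6*b) ∣ 2^9*3^5*n^2*(n+1)*(n^4+93*n^3+629*n^2+1339*n+818)*M^4 := by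
      have := (hkey 2 4 (by norm_num)).mul_right (2^9*3^5*(n+1)*(n^4+93*n^3+629*n^2+1339*n+818))
      rw [show (2:ℤ)^9*3^5*n^2*(n+1)*(n^4+93*n^3+629*n^2+1339*n+818)*M^4
          = n^2*M^4*(2^9*3^5*(n+1)*(n^4+93*n^3+629*n^2+1339*n+818)) by ring]
      exact this
    have t4 : (p:ℤ)^(6*b) ∣ 2^7*3^4*n^3*(n+1)^2*(13*n^5+436*n^4+3688*n^3+12782*n^2+19163*n+9998)*M^3 := by
      have := (hkey 3 3 (by norm_num)).mul_right
        (2^7*3^4*(n+1)^2*(13*n^5+436*n^4+3688*n^3+12782*n^2+19163*n+9998))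
      rw [show (2:ℤ)^7*3^4*n^3*(n+1)^2*(13*n^5+436*n^4+3688*n^3+12782*n^2+19163*n+9998)*M^3
          = n^3*M^3*(2^7*3^4*(n+1)^2*(13*n^5+436*n^4+3688*n^3+12782*n^2+19163*n+9998)) by ring]
      exact this
    have t5 : (p:ℤ)^(6*b) ∣ 2^2*3^3*n^4*(n+1)^3*(n+2)*(n+7)^2*(5*n^4+447*n^3+3303*n^2+7873*n+5652)*M^2 := by
      have := (hkey 4 2 (by norm_num)).mul_right
        (2^2*3^3*(n+1)^3*(n+2)*(n+7)^2*(5*n^4+447*n^3+3303*n^2+7873*n+5652))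
      rw [show (2:ℤ)^2*3^3*n^4*(n+1)^3*(n+2)*(n+7)^2*(5*n^4+447*n^3+3303*n^2+7873*n+5652)*M^2
          = n^4*M^2*(2^2*3^3*(n+1)^3*(n+2)*(n+7)^2*(5*n^4+447*n^3+3303*n^2+7873*n+5652)) by ring]
      exact this
    have t6 : (p:ℤ)^(6*b) ∣ 2^2*3^3*n^5*(n+1)^4*(n+2)^2*(n+5)^2*(n+7)^3*(3*n+5)*M := by
      have := (hkey 5 1 (by norm_num)).mul_right
        (2^2*3^3*(n+1)^4*(n+2)^2*(n+5)^2*(n+7)^3*(3*n+5))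
      rw [show (2:ℤ)^2*3^3*n^5*(n+1)^4*(n+2)^2*(n+5)^2*(n+7)^3*(3*n+5)*M
          = n^5*M^1*(2^2*3^3*(n+1)^4*(n+2)^2*(n+5)^2*(n+7)^3*(3*n+5)) by ring]
      exact this
    have t7 : (p:ℤ)^(6*b) ∣ n^6*(n+1)^5*(n+2)^3*(n+5)^3*(n+7)^4 := by
      have := (hkey 6 0 (by norm_num)).mul_right ((n+1)^5*(n+2)^3*(n+5)^3*(n+7)^4)
      rw [show n^6*(n+1)^5*(n+2)^3*(n+5)^3*(n+7)^4
          = n^6*M^0*((n+1)^5*(n+2)^3*(n+5)^3*(n+7)^4) by ring]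
      exact this
    exact dvd_add (dvd_sub (dvd_add (dvd_sub (dvd_add (dvd_sub t1 t2) t3) t4) t5) t6) t7
  have hpD : (p:ℤ)^(10*b+1) ∣ D := by
    have h1 : (p:ℤ)^(10*b+1) ∣ (p:ℤ)^(4*a+6*b) := pow_dvd_pow _ (by omega)
    refine h1.trans ?_
    have h2 : (p:ℤ)^(4*a+6*b) ∣ n^4 * R := by
      rw [pow_add]
      exact mul_dvd_mul (by rw [show 4*a = a*4 by ring, pow_mul]; exact pow_dvd_pow_of_dvd hpan 4) hpR
    refine h2.trans ?_
    rw [hD, show (54:ℤ)*n^4*(n+1)^2*R = n^4*R*(54*(n+1)^2) by ring]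
    exact dvd_mul_right _ _
  have hpN : (p:ℤ)^(10*b+1) ∣ N := hND ▸ (hpD.mul_left k)
  have : (p:ℕ)^(10*b+1) ∣ N.natAbs := by
    rw [← Int.natCast_dvd]; push_cast; exact hpN
  rw [Nat.Prime.pow_dvd_iff_le_factorization hp (Int.natAbs_ne_zero.mpr hN0), hNfac] at this
  omega
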